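/- Accuracy criterion for the approximate factorization (Parlett's condition): let A and H be real symmetric n×n matrices and σ ∈ ℝ, and suppose the spectral norm of the factorization error satisfies ‖H‖₂ < min_{1≤j≤n} |λ_j(A) − σ|. Then the number of negative eigenvalues (with multiplicity) of the symmetric matrix (A − σI) − H equals ν_A(σ) = #{j : λ_j(A) < σ}, i.e., the approximate factorization yields the correct eigenvalue count at the shift σ. -/

import Mathlib

/-- The spectral norm (operator 2-norm) of a real matrix, i.e. the operator
norm of the induced linear map between Euclidean spaces. -/
noncomputable def specNorm {m n : Type*} [Fintype m] [Fintype n] [DecidableEq n]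
    (E : Matrix m n ℝ) : ℝ :=
  ‖LinearMap.toContinuousLinearMap (Matrix.toEuclideanLin E)‖

/-- `σ • I` is a real symmetric matrix. -/
theorem smul_one_isHermitian {n : ℕ} (σ : ℝ) :
    ((σ • 1 : Matrix (Fin n) (Fin n) ℝ)).IsHermitian := by
  simp [Matrix.IsHermitian]

/-!
Let `V₋` and `V₊` be the spans of the eigenvectors of `A` with eigenvalue below, resp. at
least, `σ`. Since `|⟪x, H x⟫| ≤ ‖H‖₂ ‖x‖²` and every eigenvalue of `A - σI` exceeds `‖H‖₂` in
modulus, the quadratic form of `M = (A - σI) - H` is negative definite on `V₋` and positive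
definite on `V₊`. Then `V₋` meets the span of the eigenvectors of `M` with nonnegative eigenvalues
trivially, and `V₊` the span of those with negative eigenvalues; as `dim V₋ + dim V₊ = n`,
counting dimensions gives that `M` has exactly `dim V₋ = ν_A(σ)` negative eigenvalues.
-/
open Finset Module Submodule
open scoped RealInnerProductSpace

lemma Submodule.disjoint_of_neg_of_nonneg {R M : Type*} [Ring R] [AddCommGroup M] [Module R M]
    {Q : M → ℝ} {V W : Submodule R M} (hV : ∀ x ∈ V, x ≠ 0 → Q x < 0) (hW : ∀ x ∈ W, 0 ≤ Q x) :
    Disjoint V W :=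
  disjoint_def.2 fun x hxV hxW => by_contra fun hx0 => (hV x hxV hx0).not_ge (hW x hxW)

section Inertia

variable {ι κ E : Type*} [Fintype ι] [Fintype κ] [NormedAddCommGroup E] [InnerProductSpace ℝ E]

namespace OrthonormalBasis

lemma inner_eq_zero_of_mem_span_image (b : OrthonormalBasis ι ℝ E) {S : Set ι} {x : E}
    (hx : x ∈ span ℝ (b '' S)) {i : ι} (hi : i ∉ S) : ⟪b i, x⟫ = 0 := by
  induction hx using Submodule.span_induction with
  | mem y hy =>
    obtain ⟨j, hj, rfl⟩ := hy
    exact b.orthonormal.2 fun h => hi (h ▸ hj)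
  | zero => exact inner_zero_right _
  | add y z _ _ hy hz => rw [inner_add_right, hy, hz, add_zero]
  | smul c y _ hy => rw [real_inner_smul_right, hy, mul_zero]

lemma exists_inner_ne_zero (b : OrthonormalBasis ι ℝ E) {x : E} (hx : x ≠ 0) :
    ∃ i, ⟪b i, x⟫ ≠ 0 := by
  by_contra! h
  exact hx (by simpa [h] using (b.sum_repr' x).symm)

lemma finrank_span_image (b : OrthonormalBasis ι ℝ E) (S : Finset ι) :
    finrank ℝ (span ℝ (b '' S)) = #S := by
  rw [Set.image_eq_range]
  exact (finrank_span_eq_card (b.orthonormal.comp ((↑) : S → ι)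
    Subtype.val_injective).linearIndependent).trans (Fintype.card_coe S)

end OrthonormalBasis

variable {T : E →ₗ[ℝ] E} {b : OrthonormalBasis ι ℝ E} {μ : ι → ℝ}

lemma inner_map_self_sub_mul_norm_sq (hT : ∀ i, T (b i) = μ i • b i) (c : ℝ) (x : E) :
    ⟪x, T x⟫ - c * ‖x‖ ^ 2 = ∑ i, (μ i - c) * ⟪b i, x⟫ ^ 2 := by
  have hTx : T x = ∑ i, (μ i * ⟪b i, x⟫) • b i := by
    conv_lhs => rw [← b.sum_repr' x]
    simp only [map_sum, map_smul, hT, smul_smul, mul_comm]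
  rw [hTx, inner_sum, ← b.sum_sq_inner_right, mul_sum, ← sum_sub_distrib]
  refine sum_congr rfl fun i _ => ?_
  rw [real_inner_smul_right, real_inner_comm]
  ring

lemma inner_map_self_lt_of_mem_span (hT : ∀ i, T (b i) = μ i • b i) {S : Set ι} {c : ℝ}
    (hS : ∀ i ∈ S, μ i < c) {x : E} (hx : x ∈ span ℝ (b '' S)) (hx0 : x ≠ 0) :
    ⟪x, T x⟫ < c * ‖x‖ ^ 2 := by
  rw [← sub_neg, inner_map_self_sub_mul_norm_sq hT]
  have hout : ∀ i ∉ S, ⟪b i, x⟫ = 0 := fun i hi => b.inner_eq_zero_of_mem_span_image hx hi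
  obtain ⟨i₀, hi₀⟩ := b.exists_inner_ne_zero hx0
  refine sum_neg' (fun i _ => ?_) ⟨i₀, mem_univ _, ?_⟩
  · by_cases hi : i ∈ S
    · exact mul_nonpos_of_nonpos_of_nonneg (sub_nonpos.2 (hS i hi).le) (sq_nonneg _)
    · simp [hout i hi]
  · have hi₀S : i₀ ∈ S := by_contra fun h => hi₀ (hout i₀ h)
    exact mul_neg_of_neg_of_pos (sub_neg.2 (hS i₀ hi₀S)) (by positivity)

lemma inner_map_self_le_of_mem_span (hT : ∀ i, T (b i) = μ i • b i) {S : Set ι} {c : ℝ}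
    (hS : ∀ i ∈ S, μ i ≤ c) {x : E} (hx : x ∈ span ℝ (b '' S)) : ⟪x, T x⟫ ≤ c * ‖x‖ ^ 2 := by
  rw [← sub_nonpos, inner_map_self_sub_mul_norm_sq hT]
  refine sum_nonpos fun i _ => ?_
  by_cases hi : i ∈ S
  · exact mul_nonpos_of_nonpos_of_nonneg (sub_nonpos.2 (hS i hi)) (sq_nonneg _)
  · simp [b.inner_eq_zero_of_mem_span_image hx hi]

lemma lt_inner_map_self_of_mem_span (hT : ∀ i, T (b i) = μ i • b i) {S : Set ι} {c : ℝ}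
    (hS : ∀ i ∈ S, c < μ i) {x : E} (hx : x ∈ span ℝ (b '' S)) (hx0 : x ≠ 0) :
    c * ‖x‖ ^ 2 < ⟪x, T x⟫ := by
  have h := inner_map_self_lt_of_mem_span (T := -T) (μ := -μ) (c := -c)
    (fun i => by simp [hT]) (fun i hi => neg_lt_neg (hS i hi)) hx hx0
  simpa using h

lemma le_inner_map_self_of_mem_span (hT : ∀ i, T (b i) = μ i • b i) {S : Set ι} {c : ℝ}
    (hS : ∀ i ∈ S, c ≤ μ i) {x : E} (hx : x ∈ span ℝ (b '' S)) : c * ‖x‖ ^ 2 ≤ ⟪x, T x⟫ := by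
  have h := inner_map_self_le_of_mem_span (T := -T) (μ := -μ) (c := -c)
    (fun i => by simp [hT]) (fun i hi => neg_le_neg (hS i hi)) hx
  simpa using h

lemma card_eigenvalues_neg_eq_finrank (hT : ∀ i, T (b i) = μ i • b i) {V W : Submodule ℝ E}
    (hV : ∀ x ∈ V, x ≠ 0 → ⟪x, T x⟫ < 0) (hW : ∀ x ∈ W, x ≠ 0 → 0 < ⟪x, T x⟫)
    (hVW : finrank ℝ V + finrank ℝ W = finrank ℝ E) :
    #{i | μ i < 0} = finrank ℝ V := by
  classical
  have := b.toBasis.finiteDimensional_of_finite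
  set N : Finset ι := {i | μ i < 0}
  have hV_N : Disjoint V (span ℝ (b '' ↑Nᶜ)) := by
    refine disjoint_of_neg_of_nonneg hV fun x hx => ?_
    simpa using le_inner_map_self_of_mem_span hT (c := 0) (fun i hi => by simpa [N] using hi) hx
  have hN_W : Disjoint (span ℝ (b '' ↑N)) W := by
    refine (disjoint_of_neg_of_nonneg (Q := fun x => -⟪x, T x⟫)
      (fun x hx hx0 => neg_neg_of_pos (hW x hx hx0)) fun x hx => ?_).symm
    have hN : ∀ i ∈ (N : Set ι), μ i ≤ 0 := fun i hi => (by simpa [N] using hi : μ i < 0).le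
    simpa using inner_map_self_le_of_mem_span hT (c := 0) hN hx
  have h1 := finrank_add_finrank_le_of_disjoint hV_N
  have h2 := finrank_add_finrank_le_of_disjoint hN_W
  have h3 := N.card_add_card_compl
  rw [b.finrank_span_image] at h1 h2
  rw [← finrank_eq_card_basis b.toBasis] at h3
  omega

theorem card_eigenvalues_neg_add_eq_of_abs_inner_le {P : E →ₗ[ℝ] E} {b' : OrthonormalBasis κ ℝ E}
    {ν : κ → ℝ} (hT : ∀ i, T (b i) = μ i • b i) (hTP : ∀ k, (T + P) (b' k) = ν k • b' k)
    {ε : ℝ} (hP : ∀ x, |⟪x, P x⟫| ≤ ε * ‖x‖ ^ 2) (hε : ∀ i, ε < |μ i|) :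
    #{k | ν k < 0} = #{i | μ i < 0} := by
  classical
  set N : Finset ι := {i | μ i < 0}
  have hN : ∀ i ∈ (N : Set ι), μ i < -ε := fun i hi => by
    replace hi : μ i < 0 := by simpa [N] using hi
    linarith [hε i, abs_of_neg hi]
  have hNc : ∀ i ∈ ((Nᶜ : Finset ι) : Set ι), ε < μ i := fun i hi => by
    replace hi : 0 ≤ μ i := by simpa [N] using hi
    linarith [hε i, abs_of_nonneg hi]
  refine (card_eigenvalues_neg_eq_finrank hTP (V := span ℝ (b '' N)) (W := span ℝ (b '' ↑Nᶜ))
    ?_ ?_ ?_).trans (b.finrank_span_image N)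
  · intro x hx hx0
    have hTx := inner_map_self_lt_of_mem_span hT hN hx hx0
    rw [LinearMap.add_apply, inner_add_right]
    linarith [(abs_le.1 (hP x)).2]
  · intro x hx hx0
    have hTx := lt_inner_map_self_of_mem_span hT hNc hx hx0
    rw [LinearMap.add_apply, inner_add_right]
    linarith [(abs_le.1 (hP x)).1]
  · rw [b.finrank_span_image, b.finrank_span_image, N.card_add_card_compl,
      finrank_eq_card_basis b.toBasis]

end Inertia

lemma Matrix.IsHermitian.toEuclideanLin_eigenvectorBasis {n : Type*} [Fintype n] [DecidableEq n]
    {A : Matrix n n ℝ} (hA : A.IsHermitian) (i : n) :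
    toEuclideanLin A (hA.eigenvectorBasis i) = hA.eigenvalues i • hA.eigenvectorBasis i :=
  WithLp.ofLp_injective 2 (by simpa using hA.mulVec_eigenvectorBasis i)

lemma abs_inner_toEuclideanLin_self_le {n : Type*} [Fintype n] [DecidableEq n]
    (H : Matrix n n ℝ) (x : EuclideanSpace ℝ n) :
    |⟪x, Matrix.toEuclideanLin H x⟫| ≤ specNorm H * ‖x‖ ^ 2 :=
  calc |⟪x, Matrix.toEuclideanLin H x⟫| ≤ ‖x‖ * ‖Matrix.toEuclideanLin H x‖ :=
        abs_real_inner_le_norm _ _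
    _ ≤ ‖x‖ * (specNorm H * ‖x‖) := by
        gcongr; exact (LinearMap.toContinuousLinearMap _).le_opNorm x
    _ = specNorm H * ‖x‖ ^ 2 := by ring

/-- Parlett's accuracy criterion: if the factorization error `H` of an
approximate factorization of `A - σ·I` satisfies
`‖H‖₂ < min_j |λ_j(A) - σ|`, then the number of negative eigenvalues
(with multiplicity) of the symmetric matrix `(A - σ·I) - H` equals
`ν_A(σ) = #{j : λ_j(A) < σ}`, i.e. the approximate factorization yields the
correct eigenvalue count at the shift `σ`. -/
theorem approximate_factorization_correct_count {n : ℕ}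
    (A H : Matrix (Fin n) (Fin n) ℝ) (hA : A.IsHermitian) (hH : H.IsHermitian)
    (σ : ℝ)
    (hsmall : ∀ j : Fin n, specNorm H < |hA.eigenvalues j - σ|) :
    (Finset.univ.filter fun i =>
        ((hA.sub (smul_one_isHermitian σ)).sub hH).eigenvalues i < 0).card
      = (Finset.univ.filter fun j => hA.eigenvalues j < σ).card := by
  have hshift (j : Fin n) : Matrix.toEuclideanLin (A - σ • 1) (hA.eigenvectorBasis j)
      = (hA.eigenvalues j - σ) • hA.eigenvectorBasis j := by
    simp [sub_smul, hA.toEuclideanLin_eigenvectorBasis]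
  have hperturbed (k : Fin n) :=
    ((hA.sub (smul_one_isHermitian σ)).sub hH).toEuclideanLin_eigenvectorBasis k
  rw [map_sub, sub_eq_add_neg] at hperturbed
  have := card_eigenvalues_neg_add_eq_of_abs_inner_le hshift hperturbed (ε := specNorm H)
    (fun x => by simpa using abs_inner_toEuclideanLin_self_le H x) hsmall
  simpa only [sub_neg] using this
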